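/- Let Ω ⊂ ℝ^d be compact, Ω̃ = Ω × [0,1], C > 0, σ ∈ (0,1), and let Λ : Lip_C^σ(Ω̃) × Ω̃ → ℝ^{d'} be a causal and identifiable space-time in-context map that is continuous for the weak* topology on Lip_C^σ(Ω̃). Then the reduced map (ν, x) ↦ Λ̄(ν, x) = Λ(ν, x, e(ν̄)) is continuous on the reduced space X_C^σ = {(μ_t, x) : μ ∈ Lip_C^σ(Ω̃), x ∈ Ω, t ∈ [0,1]} for the product of the weak* topology and the Euclidean topology. -/

import Mathlib

open MeasureTheory Set Filter
open scoped ENNReal RealInnerProductSpace BigOperators Topology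

noncomputable section

/-- Euclidean space `ℝ^n`. -/
abbrev E (n : ℕ) : Type := EuclideanSpace ℝ (Fin n)

/-- Build a vector of `ℝ^n` from its coordinates. -/
def toE {n : ℕ} (f : Fin n → ℝ) : E n := (EuclideanSpace.equiv (Fin n) ℝ).symm f

/-- Parameters `θ = (Wʰ, Qʰ, Kʰ, Vʰ)ₕ` of a multi-head attention layer with token
dimension `m`, head dimension `dh`, key/query dimension `k` and `H` heads.
(Matrices are represented as linear maps.) -/
structure AttentionParams (m dh k H : ℕ) where
  W : Fin H → (E dh →L[ℝ] E m)
  Q : Fin H → (E m →L[ℝ] E k)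
  K : Fin H → (E m →L[ℝ] E k)
  V : Fin H → (E m →L[ℝ] E dh)

/-- The (unmasked) multi-head self-attention in-context map `Γ_θ(μ, x)`. -/
def attention {m dh k H : ℕ} (θ : AttentionParams m dh k H)
    (μ : Measure (E m)) (x : E m) : E m :=
  x + ∑ h : Fin H, θ.W h (∫ y,
      (Real.exp (⟪θ.Q h x, θ.K h y⟫ / Real.sqrt k) /
        ∫ z, Real.exp (⟪θ.Q h x, θ.K h z⟫ / Real.sqrt k) ∂μ) • θ.V h y ∂μ)

/-- In-context maps `(μ, x) ↦ G(μ, x)`. -/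
abbrev ICMap (m m' : ℕ) : Type := Measure (E m) → E m → E m'

/-- In-context composition `(G₂ ⋄ G₁)(μ, x) = G₂(G₁(μ, ·)♯μ, G₁(μ, x))`. -/
def ictxComp {m m' m'' : ℕ} (G₂ : ICMap m' m'') (G₁ : ICMap m m') : ICMap m m'' :=
  fun μ x => G₂ (μ.map (G₁ μ)) (G₁ μ x)

/-- A context-free (tokenwise) layer, viewed as an in-context map. -/
def ctxFree {m m' : ℕ} (F : E m → E m') : ICMap m m' := fun _ x => F x

/-- `IsAttnChain dmax Hmax G` holds iff `G = F_{ξ_L} ⋄ Γ_{θ_L} ⋄ ⋯ ⋄ F_{ξ_1} ⋄ Γ_{θ_1}`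
for some `L ≥ 1`, where each `Γ_{θ_ℓ}` is a multi-head self-attention with token
dimension `≤ dmax`, head and key dimensions `1`, and at most `Hmax` heads, and each
`F_{ξ_ℓ}` is a context-free tokenwise layer. -/
inductive IsAttnChain (dmax Hmax : ℕ) : {m m' : ℕ} → ICMap m m' → Prop
  | base {m m' H : ℕ} (hm : m ≤ dmax) (hH : H ≤ Hmax)
      (θ : AttentionParams m 1 1 H) (F : E m → E m') :
      IsAttnChain dmax Hmax (ictxComp (ctxFree F) (attention θ))
  | step {m m' m'' H : ℕ} {T : ICMap m m'} (hT : IsAttnChain dmax Hmax T)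
      (hm : m' ≤ dmax) (hH : H ≤ Hmax)
      (θ : AttentionParams m' 1 1 H) (F : E m' → E m'') :
      IsAttnChain dmax Hmax (ictxComp (ctxFree F) (ictxComp (attention θ) T))

/-- The elementary in-context map `γ_λ`, `λ = (a, b, c, v)`. -/
def elemGamma {d : ℕ} (a : E d) (b c v : ℝ) (μ : Measure (E d)) (x : E d) : ℝ :=
  ⟪x, a⟫ + b + ∫ y,
      (Real.exp (c * (⟪x, a⟫ + b) * (⟪y, a⟫ + b)) * (v * (⟪a, y⟫ + b)) /
        ∫ z, Real.exp (c * (⟪x, a⟫ + b) * (⟪z, a⟫ + b)) ∂μ) ∂μ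

/-- Component-wise (Hadamard) product `v₁ ⊙ ⋯ ⊙ v_T` of vectors in `ℝ^n`. -/
def hprod {n T : ℕ} (f : Fin T → E n) : E n := toE fun i => ∏ t, f t i

/-- Nested application `Φ(v_T, Φ(v_{T-1}, ⋯ Φ(v_1, 𝟏) ⋯ ))`. -/
def nestPhi {n : ℕ} (Φ : E n × E n → E n) : (T : ℕ) → (Fin T → E n) → E n
  | 0, _ => toE fun _ => 1
  | T + 1, v => Φ (v (Fin.last T), nestPhi Φ T fun t => v t.castSucc)

/-- Composition of a list of in-context maps; the head of the list acts first. -/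
def compList {m : ℕ} : List (ICMap m m) → ICMap m m
  | [] => fun _ x => x
  | l :: ls => ictxComp (compList ls) l

/-! ### Masked (space-time) framework -/

/-- Time marginal `μ̄ = P♯μ`, `P(x, t) = t`. -/
def timeMarg {m : ℕ} (μ : Measure (E m × ℝ)) : Measure ℝ := μ.map Prod.snd

/-- Squared 2-Wasserstein distance `W₂(α, β)²`, as an infimum over couplings. -/
def W2sq {m : ℕ} (α β : Measure (E m)) : ℝ≥0∞ :=
  sInf {c | ∃ π : Measure (E m × E m), π.map Prod.fst = α ∧ π.map Prod.snd = β ∧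
      c = ∫⁻ p, edist p.1 p.2 ^ 2 ∂π}

/-- `μ ∈ Lip_C^σ(Ω̃)`: a probability measure on `Ω̃ = Ω × [0,1]` admitting a
disintegration `μ(dx, ds) = μ(dx|s) μ̄(ds)` whose conditional `s ↦ μ(·|s)` is
`C`-Lipschitz for `W₂`, and with `μ̄({0}) ≥ σ`. -/
def IsLipCtx {m : ℕ} (Ω : Set (E m)) (C σ : ℝ) (μ : Measure (E m × ℝ)) : Prop :=
  IsProbabilityMeasure μ ∧ μ ((Ω ×ˢ Icc (0:ℝ) 1)ᶜ) = 0 ∧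
    ENNReal.ofReal σ ≤ timeMarg μ {0} ∧
    ∃ κ : ℝ → Measure (E m), Measurable κ ∧ (∀ s, IsProbabilityMeasure (κ s)) ∧
      (∀ s, κ s Ωᶜ = 0) ∧
      μ = (timeMarg μ).bind (fun s => (κ s).map fun x => (x, s)) ∧
      ∀ s ∈ Icc (0:ℝ) 1, ∀ t ∈ Icc (0:ℝ) 1,
        W2sq (κ s) (κ t) ≤ ENNReal.ofReal (C * |s - t|) ^ 2

/-- The masked measure `μ_t = (1_{[0,t]} / μ̄([0,t])) · μ` (restriction of the time
variable to `[0, t]`, renormalized). -/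
def maskedM {m : ℕ} (μ : Measure (E m × ℝ)) (t : ℝ) : Measure (E m × ℝ) :=
  (μ (univ ×ˢ Icc 0 t))⁻¹ • μ.restrict (univ ×ˢ Icc 0 t)

/-- The masked measure, as a probability measure (junk value `μ` itself when
`μ̄([0,t]) = 0`; for `μ ∈ Lip_C^σ` and `t ∈ [0,1]` one has `μ̄([0,t]) ≥ σ > 0`). -/
def maskedP {m : ℕ} (μ : ProbabilityMeasure (E m × ℝ)) (t : ℝ) :
    ProbabilityMeasure (E m × ℝ) :=
  if h : μ.toMeasure (univ ×ˢ Icc 0 t) = 0 then μ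
  else ⟨maskedM μ.toMeasure t, ⟨by
    simp only [maskedM, Measure.smul_apply, Measure.restrict_apply_univ, smul_eq_mul]
    exact ENNReal.inv_mul_cancel h (measure_ne_top _ _)⟩⟩

/-- Space-time in-context maps `(μ, (x, t)) ↦ Λ(μ, x, t)`. -/
abbrev STMap (m m' : ℕ) : Type := Measure (E m × ℝ) → E m × ℝ → E m'

/-- Masked in-context composition
`(Γ₂ ⋄ Γ₁)(μ, x, t) = Γ₂((Γ₁(μ), Id)♯μ, Γ₁(μ, x, t), t)`. -/
def stComp {m m' m'' : ℕ} (Γ₂ : STMap m' m'') (Γ₁ : STMap m m') : STMap m m'' :=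
  fun μ p => Γ₂ (μ.map fun q => (Γ₁ μ q, q.2)) (Γ₁ μ p, p.2)

/-- A context-free layer acting tokenwise in space, as a space-time map. -/
def stCtxFree {m m' : ℕ} (F : E m → E m') : STMap m m' := fun _ p => F p.1

/-- The masked multi-head self-attention in-context map `Γ_θ(μ, x, t)`. -/
def maskedAttention {m dh k H : ℕ} (θ : AttentionParams m dh k H)
    (μ : Measure (E m × ℝ)) (p : E m × ℝ) : E m :=
  p.1 + ∑ h : Fin H, θ.W h (∫ y,
      ((Real.exp (⟪θ.Q h p.1, θ.K h y.1⟫ / Real.sqrt k) *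
          (Icc (0:ℝ) p.2).indicator 1 y.2) /
        ∫ z, Real.exp (⟪θ.Q h p.1, θ.K h z.1⟫ / Real.sqrt k) *
          (Icc (0:ℝ) p.2).indicator 1 z.2 ∂μ) • θ.V h y.1 ∂μ)

/-- The unmasked attention formula on space-time measures (no time masking). -/
def attentionST {m dh k H : ℕ} (θ : AttentionParams m dh k H)
    (μ : Measure (E m × ℝ)) (x : E m) : E m :=
  x + ∑ h : Fin H, θ.W h (∫ y,
      (Real.exp (⟪θ.Q h x, θ.K h y.1⟫ / Real.sqrt k) /
        ∫ z, Real.exp (⟪θ.Q h x, θ.K h z.1⟫ / Real.sqrt k) ∂μ) • θ.V h y.1 ∂μ)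

/-- Causality of a space-time in-context map: `Λ(μ, x, t) = Λ(μ_t, x, t)`. -/
def IsCausalM {m d' : ℕ} (Ω : Set (E m)) (C σ : ℝ) (Λ : STMap m d') : Prop :=
  ∀ μ, IsLipCtx Ω C σ μ → ∀ x ∈ Ω, ∀ t ∈ Icc (0:ℝ) 1,
    Λ μ (x, t) = Λ (maskedM μ t) (x, t)

/-- Identifiability: `μ_t = μ_{t'}` implies `Λ(μ_t, ·, t) = Λ(μ_{t'}, ·, t')`. -/
def IsIdentifiableM {m d' : ℕ} (Ω : Set (E m)) (C σ : ℝ) (Λ : STMap m d') : Prop :=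
  ∀ μ, IsLipCtx Ω C σ μ → ∀ t ∈ Icc (0:ℝ) 1, ∀ t' ∈ Icc (0:ℝ) 1,
    maskedM μ t = maskedM μ t' →
    ∀ x ∈ Ω, Λ (maskedM μ t) (x, t) = Λ (maskedM μ t') (x, t')

/-- Space-time in-context maps taking a probability measure (carrying the weak*
topology) as context. -/
abbrev PSTMap (m d' : ℕ) : Type := ProbabilityMeasure (E m × ℝ) → E m × ℝ → E d'

/-- Causality, probability-measure version. -/
def IsCausalP {m d' : ℕ} (Ω : Set (E m)) (C σ : ℝ) (Λ : PSTMap m d') : Prop :=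
  ∀ μ : ProbabilityMeasure (E m × ℝ), IsLipCtx Ω C σ μ.toMeasure →
    ∀ x ∈ Ω, ∀ t ∈ Icc (0:ℝ) 1, Λ μ (x, t) = Λ (maskedP μ t) (x, t)

/-- Identifiability, probability-measure version. -/
def IsIdentifiableP {m d' : ℕ} (Ω : Set (E m)) (C σ : ℝ) (Λ : PSTMap m d') : Prop :=
  ∀ μ : ProbabilityMeasure (E m × ℝ), IsLipCtx Ω C σ μ.toMeasure →
    ∀ t ∈ Icc (0:ℝ) 1, ∀ t' ∈ Icc (0:ℝ) 1,
      maskedP μ t = maskedP μ t' →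
      ∀ x ∈ Ω, Λ (maskedP μ t) (x, t) = Λ (maskedP μ t') (x, t')

/-- `e(μ̄) = max supp(μ̄)`: the endpoint of the support of the time marginal. -/
def timeEnd {m : ℕ} (μ : Measure (E m × ℝ)) : ℝ :=
  sSup {r : ℝ | ∀ ε > 0, timeMarg μ (Ioo (r - ε) (r + ε)) ≠ 0}

/-- The reduced space `X_C^σ = {(μ_t, x) : μ ∈ Lip_C^σ(Ω̃), x ∈ Ω, t ∈ [0,1]}`. -/
def XCset {d : ℕ} (Ω : Set (E d)) (C σ : ℝ) :
    Set (ProbabilityMeasure (E d × ℝ) × E d) :=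
  {p | ∃ μ : ProbabilityMeasure (E d × ℝ), IsLipCtx Ω C σ μ.toMeasure ∧
      ∃ t ∈ Icc (0:ℝ) 1, ∃ x ∈ Ω, p = (maskedP μ t, x)}

/-- Deep masked transformers `F_{ξ_L} ⋄ Γ_{θ_L} ⋄ ⋯ ⋄ F_{ξ_1} ⋄ Γ_{θ_1}` with masked
attentions of token dimension `≤ dmax`, head and key dimensions `1`, and `≤ Hmax`
heads. -/
inductive IsMaskedChain (dmax Hmax : ℕ) : {m m' : ℕ} → STMap m m' → Prop
  | base {m m' H : ℕ} (hm : m ≤ dmax) (hH : H ≤ Hmax)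
      (θ : AttentionParams m 1 1 H) (F : E m → E m') :
      IsMaskedChain dmax Hmax (stComp (stCtxFree F) (maskedAttention θ))
  | step {m m' m'' H : ℕ} {T : STMap m m'} (hT : IsMaskedChain dmax Hmax T)
      (hm : m' ≤ dmax) (hH : H ≤ Hmax)
      (θ : AttentionParams m' 1 1 H) (F : E m' → E m'') :
      IsMaskedChain dmax Hmax (stComp (stCtxFree F) (stComp (maskedAttention θ) T))

/-- Reduced in-context maps `(ν, x) ↦ Λ̄(ν, x)`. -/
abbrev RMap (m m' : ℕ) : Type := Measure (E m × ℝ) → E m → E m'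

/-- Composition of reduced maps; the push-forward keeps the time fixed. -/
def rComp {m m' m'' : ℕ} (R₂ : RMap m' m'') (R₁ : RMap m m') : RMap m m'' :=
  fun ν x => R₂ (ν.map fun q => (R₁ ν q.1, q.2)) (R₁ ν x)

/-- Context-free tokenwise layer as a reduced map. -/
def rCtxFree {m m' : ℕ} (F : E m → E m') : RMap m m' := fun _ x => F x

/-- Reduced map `Γ̄_θ(ν, x) = Γ_θ(ν, x, e(ν̄))` of the masked attention. -/
def reducedAttention {m dh k H : ℕ} (θ : AttentionParams m dh k H) : RMap m m :=
  fun ν x => maskedAttention θ ν (x, timeEnd ν)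

/-- Deep transformers built from reduced masked attentions and context-free layers. -/
inductive IsReducedChain (dmax Hmax : ℕ) : {m m' : ℕ} → RMap m m' → Prop
  | base {m m' H : ℕ} (hm : m ≤ dmax) (hH : H ≤ Hmax)
      (θ : AttentionParams m 1 1 H) (F : E m → E m') :
      IsReducedChain dmax Hmax (rComp (rCtxFree F) (reducedAttention θ))
  | step {m m' m'' H : ℕ} {T : RMap m m'} (hT : IsReducedChain dmax Hmax T)
      (hm : m' ≤ dmax) (hH : H ≤ Hmax)
      (θ : AttentionParams m' 1 1 H) (F : E m' → E m'') :
      IsReducedChain dmax Hmax (rComp (rCtxFree F) (rComp (reducedAttention θ) T))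

end

/-!
On the reduced space every context is itself a masked measure `ν = μ_t`, and masking preserves
`Lip_C^σ(Ω̃)`: it restricts and renormalizes the time marginal, keeping the conditionals and the
atom at time `0`. Since the time marginal of `ν` lives on `[0, e(ν̄)] ⊆ [0, 1]`, both `ν_{e(ν̄)}`
and `ν_1` equal `ν`, so identifiability gives `Λ(ν, x, e(ν̄)) = Λ(ν, x, 1)`. The reduced map is
therefore the restriction of the continuous map `(ν, x) ↦ Λ(ν, x, 1)`.
-/

open ProbabilityTheory

section GraphMeasure

variable {X T : Type*} [MeasurableSpace X] [MeasurableSpace T]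

lemma measurable_map_prodMk_right {κ : T → Measure X} (hκ : Measurable κ)
    (hκp : ∀ s, IsProbabilityMeasure (κ s)) :
    Measurable fun s => (κ s).map fun x => (x, s) := by
  let η : Kernel T X := ⟨κ, hκ⟩
  have : IsMarkovKernel η := ⟨hκp⟩
  have hη : (fun s => (κ s).map fun x => (x, s)) = η ×ₖ Kernel.id := by
    funext s
    rw [Kernel.prod_apply, Kernel.id_apply, Measure.prod_dirac]
    rfl
  rw [hη]
  exact Kernel.measurable _

lemma restrict_univ_prod_bind {κ : T → Measure X}
    (hκ : Measurable fun s => (κ s).map fun x => (x, s)) (m : Measure T) {S : Set T}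
    (hS : MeasurableSet S) :
    (m.bind fun s => (κ s).map fun x => (x, s)).restrict (univ ×ˢ S) =
      (m.restrict S).bind fun s => (κ s).map fun x => (x, s) := by
  ext A hA
  rw [Measure.restrict_apply hA, Measure.bind_apply (hA.inter (MeasurableSet.univ.prod hS))
    hκ.aemeasurable, Measure.bind_apply hA hκ.aemeasurable, ← lintegral_indicator hS]
  congr 1
  ext s
  rw [Measure.map_apply measurable_prodMk_right (hA.inter (MeasurableSet.univ.prod hS)),
    preimage_inter]
  by_cases hs : s ∈ S
  · rw [indicator_of_mem hs, mk_preimage_prod_left hs, inter_univ,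
      Measure.map_apply measurable_prodMk_right hA]
  · rw [indicator_of_notMem hs, mk_preimage_prod_left_eq_empty hs, inter_empty, measure_empty]

end GraphMeasure

section Masking

variable {d : ℕ} {Ω : Set (E d)} {C σ : ℝ}

lemma timeMarg_maskedM (μ : Measure (E d × ℝ)) (t : ℝ) :
    timeMarg (maskedM μ t) = (μ (univ ×ˢ Icc 0 t))⁻¹ • (timeMarg μ).restrict (Icc 0 t) := by
  rw [timeMarg, maskedM, Measure.map_smul, univ_prod,
    ← Measure.restrict_map measurable_snd measurableSet_Icc, timeMarg]

lemma IsLipCtx.timeMarg_compl_Icc {μ : Measure (E d × ℝ)} (hμ : IsLipCtx Ω C σ μ) :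
    timeMarg μ (Icc 0 1)ᶜ = 0 := by
  rw [timeMarg, Measure.map_apply measurable_snd measurableSet_Icc.compl]
  refine measure_mono_null ?_ hμ.2.1
  exact fun p hp hmem => hp hmem.2

lemma IsLipCtx.ofReal_le_measure_univ_prod_Icc {μ : Measure (E d × ℝ)}
    (hμ : IsLipCtx Ω C σ μ) {t : ℝ} (ht : 0 ≤ t) :
    ENNReal.ofReal σ ≤ μ (univ ×ˢ Icc 0 t) := by
  refine hμ.2.2.1.trans ?_
  rw [timeMarg, Measure.map_apply measurable_snd (measurableSet_singleton 0), univ_prod]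
  exact measure_mono (preimage_mono (singleton_subset_iff.2 (left_mem_Icc.2 ht)))

lemma IsLipCtx.measure_univ_prod_Icc_ne_zero {μ : Measure (E d × ℝ)}
    (hμ : IsLipCtx Ω C σ μ) (hσ : 0 < σ) {t : ℝ} (ht : 0 ≤ t) :
    μ (univ ×ˢ Icc 0 t) ≠ 0 :=
  ((ENNReal.ofReal_pos.2 hσ).trans_le (hμ.ofReal_le_measure_univ_prod_Icc ht)).ne'

lemma isLipCtx_maskedM {μ : Measure (E d × ℝ)} (hμ : IsLipCtx Ω C σ μ) (hσ : 0 < σ)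
    {t : ℝ} (ht : 0 ≤ t) : IsLipCtx Ω C σ (maskedM μ t) := by
  have hc0 := hμ.measure_univ_prod_Icc_ne_zero hσ ht
  obtain ⟨hprob, hsupp, hσμ, κ, hκ, hκp, hκΩ, hdis, hlip⟩ := hμ
  have hgraph := measurable_map_prodMk_right hκ hκp
  refine ⟨⟨?_⟩, ?_, ?_, κ, hκ, hκp, hκΩ, ?_, hlip⟩
  · rw [maskedM, Measure.smul_apply, Measure.restrict_apply_univ, smul_eq_mul]
    exact ENNReal.inv_mul_cancel hc0 (measure_ne_top _ _)
  · rw [maskedM, Measure.smul_apply, Measure.restrict_apply' (MeasurableSet.univ.prod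
      measurableSet_Icc), measure_mono_null inter_subset_left hsupp, smul_zero]
  · rw [timeMarg_maskedM, Measure.smul_apply, Measure.restrict_apply' measurableSet_Icc,
      inter_eq_left.2 (singleton_subset_iff.2 (left_mem_Icc.2 ht)), smul_eq_mul]
    exact hσμ.trans (le_mul_of_one_le_left zero_le (ENNReal.one_le_inv.2 prob_le_one))
  · rw [timeMarg_maskedM, Measure.bind_smul, ← restrict_univ_prod_bind hgraph _ measurableSet_Icc,
      ← hdis]
    rfl

lemma maskedP_toMeasure {μ : ProbabilityMeasure (E d × ℝ)} {t : ℝ}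
    (h : μ.toMeasure (univ ×ˢ Icc 0 t) ≠ 0) : (maskedP μ t).toMeasure = maskedM μ t := by
  rw [show maskedP μ t = _ from dif_neg h]
  rfl

lemma isLipCtx_maskedP {μ : ProbabilityMeasure (E d × ℝ)} (hμ : IsLipCtx Ω C σ μ.toMeasure)
    (hσ : 0 < σ) {t : ℝ} (ht : 0 ≤ t) : IsLipCtx Ω C σ (maskedP μ t).toMeasure := by
  rw [maskedP_toMeasure (hμ.measure_univ_prod_Icc_ne_zero hσ ht)]
  exact isLipCtx_maskedM hμ hσ ht

lemma maskedP_eq_self {μ : ProbabilityMeasure (E d × ℝ)} {t : ℝ}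
    (h : timeMarg μ.toMeasure (Icc 0 t)ᶜ = 0) : maskedP μ t = μ := by
  have hnull : μ.toMeasure (univ ×ˢ Icc 0 t)ᶜ = 0 := by
    rwa [univ_prod, ← preimage_compl, ← Measure.map_apply measurable_snd measurableSet_Icc.compl]
  have hfull : μ.toMeasure (univ ×ˢ Icc 0 t) = 1 :=
    (prob_compl_eq_zero_iff (MeasurableSet.univ.prod measurableSet_Icc)).1 hnull
  apply ProbabilityMeasure.toMeasure_injective
  rw [maskedP_toMeasure (by simp [hfull]), maskedM, hfull, inv_one, one_smul]
  exact Measure.restrict_eq_self_of_ae_mem (ae_iff.2 hnull)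

end Masking

section TimeEnd

variable {d : ℕ} {Ω : Set (E d)} {C σ : ℝ}

lemma timeEnd_eq_sSup_support (μ : Measure (E d × ℝ)) :
    timeEnd μ = sSup (timeMarg μ).support := by
  unfold timeEnd
  congr 1
  ext r
  simp only [(nhds_basis_Ioo_pos r).mem_measureSupport, pos_iff_ne_zero]
  rfl

lemma IsLipCtx.support_timeMarg_subset {μ : Measure (E d × ℝ)} (hμ : IsLipCtx Ω C σ μ) :
    (timeMarg μ).support ⊆ Icc 0 1 :=
  Measure.support_subset_of_isClosed isClosed_Icc (mem_ae_iff.2 hμ.timeMarg_compl_Icc)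

lemma IsLipCtx.bddAbove_support_timeMarg {μ : Measure (E d × ℝ)} (hμ : IsLipCtx Ω C σ μ) :
    BddAbove (timeMarg μ).support :=
  ⟨1, fun _ hr => (hμ.support_timeMarg_subset hr).2⟩

lemma IsLipCtx.zero_mem_support_timeMarg {μ : Measure (E d × ℝ)} (hμ : IsLipCtx Ω C σ μ)
    (hσ : 0 < σ) : 0 ∈ (timeMarg μ).support :=
  (Measure.mem_support_iff_forall 0).2 fun _ hU => (ENNReal.ofReal_pos.2 hσ).trans_le
    (hμ.2.2.1.trans (measure_mono (singleton_subset_iff.2 (mem_of_mem_nhds hU))))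

lemma IsLipCtx.timeEnd_mem_Icc {μ : Measure (E d × ℝ)} (hμ : IsLipCtx Ω C σ μ) (hσ : 0 < σ) :
    timeEnd μ ∈ Icc 0 1 := by
  have hbdd := hμ.bddAbove_support_timeMarg
  rw [timeEnd_eq_sSup_support]
  exact ⟨le_csSup hbdd (hμ.zero_mem_support_timeMarg hσ),
    csSup_le ⟨0, hμ.zero_mem_support_timeMarg hσ⟩ fun _ hr => (hμ.support_timeMarg_subset hr).2⟩

lemma IsLipCtx.timeMarg_compl_Icc_timeEnd {μ : Measure (E d × ℝ)} (hμ : IsLipCtx Ω C σ μ) :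
    timeMarg μ (Icc 0 (timeEnd μ))ᶜ = 0 := by
  have hbdd := hμ.bddAbove_support_timeMarg
  rw [timeEnd_eq_sSup_support]
  exact measure_mono_null (compl_subset_compl.2 fun _ hr =>
    ⟨(hμ.support_timeMarg_subset hr).1, le_csSup hbdd hr⟩) Measure.measure_compl_support

end TimeEnd

lemma IsIdentifiableP.apply_timeEnd_eq_apply_one {d d' : ℕ} {Ω : Set (E d)} {C σ : ℝ}
    {Λ : PSTMap d d'} (hident : IsIdentifiableP Ω C σ Λ) (hσ : 0 < σ)
    {ν : ProbabilityMeasure (E d × ℝ)} (hν : IsLipCtx Ω C σ ν.toMeasure) {x : E d} (hx : x ∈ Ω) :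
    Λ ν (x, timeEnd ν.toMeasure) = Λ ν (x, 1) := by
  have hend : maskedP ν (timeEnd ν.toMeasure) = ν := maskedP_eq_self hν.timeMarg_compl_Icc_timeEnd
  have hone : maskedP ν 1 = ν := maskedP_eq_self hν.timeMarg_compl_Icc
  have h := hident ν hν _ (hν.timeEnd_mem_Icc hσ) 1 (right_mem_Icc.2 zero_le_one)
    (hend.trans hone.symm) x hx
  rwa [hend, hone] at h

lemma isLipCtx_and_mem_of_mem_XCset {d : ℕ} {Ω : Set (E d)} {C σ : ℝ} (hσ : 0 < σ)
    {p : ProbabilityMeasure (E d × ℝ) × E d} (hp : p ∈ XCset Ω C σ) :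
    IsLipCtx Ω C σ p.1.toMeasure ∧ p.2 ∈ Ω := by
  obtain ⟨μ, hμ, t, ht, x, hx, rfl⟩ := hp
  exact ⟨isLipCtx_maskedP hμ hσ ht.1, hx⟩

theorem reduced_continuous_general {d d' : ℕ} (Ω : Set (E d))
    {C σ : ℝ} (hσ : σ ∈ Ioo (0:ℝ) 1)
    (Λ : PSTMap d d')
    (hcont : ContinuousOn (fun p : ProbabilityMeasure (E d × ℝ) × (E d × ℝ) => Λ p.1 p.2)
      ({μ : ProbabilityMeasure (E d × ℝ) | IsLipCtx Ω C σ μ.toMeasure} ×ˢ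
        (Ω ×ˢ Icc (0:ℝ) 1)))
    (hident : IsIdentifiableP Ω C σ Λ) :
    ContinuousOn (fun p : ProbabilityMeasure (E d × ℝ) × E d =>
      Λ p.1 (p.2, timeEnd p.1.toMeasure)) (XCset Ω C σ) := by
  have hmem := fun p (hp : p ∈ XCset Ω C σ) => isLipCtx_and_mem_of_mem_XCset hσ.1 hp
  have hcont_one : ContinuousOn (fun p : ProbabilityMeasure (E d × ℝ) × E d => Λ p.1 (p.2, 1))
      (XCset Ω C σ) :=
    hcont.comp (continuous_fst.prodMk (continuous_snd.prodMk continuous_const)).continuousOn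
      fun p hp => ⟨(hmem p hp).1, (hmem p hp).2, right_mem_Icc.2 zero_le_one⟩
  exact hcont_one.congr fun p hp => hident.apply_timeEnd_eq_apply_one hσ.1 (hmem p hp).1
    (hmem p hp).2

/-- **Continuity of the reduced map (Lemma 6 (ii)).** If a causal identifiable space-time
in-context map `Λ` is continuous for the weak* topology on `Lip_C^σ(Ω̃)`, then its
reduced map `(ν, x) ↦ Λ̄(ν, x) = Λ(ν, x, e(ν̄))` is continuous on the reduced space
`X_C^σ = {(μ_t, x) : μ ∈ Lip_C^σ(Ω̃), x ∈ Ω, t ∈ [0,1]}` for the product of the weak*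
topology and the Euclidean topology. -/
theorem reduced_continuous {d d' : ℕ} (Ω : Set (E d)) (hΩ : IsCompact Ω)
    {C σ : ℝ} (hC : 0 < C) (hσ : σ ∈ Ioo (0:ℝ) 1)
    (Λ : PSTMap d d')
    (hcont : ContinuousOn (fun p : ProbabilityMeasure (E d × ℝ) × (E d × ℝ) => Λ p.1 p.2)
      ({μ : ProbabilityMeasure (E d × ℝ) | IsLipCtx Ω C σ μ.toMeasure} ×ˢ
        (Ω ×ˢ Icc (0:ℝ) 1)))
    (hcausal : IsCausalP Ω C σ Λ) (hident : IsIdentifiableP Ω C σ Λ) :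
    ContinuousOn (fun p : ProbabilityMeasure (E d × ℝ) × E d =>
      Λ p.1 (p.2, timeEnd p.1.toMeasure)) (XCset Ω C σ) :=
  reduced_continuous_general Ω hσ Λ hcont hident
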